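/- arXiv:1405.3472 — 2 statements merged into one kernel-verified Lean document; each statement's English description precedes it below -/
import Mathlib

section
/- Let Ω be a domain in ℝ² with conformal capacitary metric ρ_(F,V), and let h ∈ H_ρ be a boundary element whose realization s_h = ⋂_{ε>0} closure(D(h,ε) ∩ Ω) consists of a single point. Then for every sequence (x_m) in Ω, ρ_(F,V)(x_m, h) → 0 implies |x_m − s_h| → 0 as m → ∞. -/
noncomputable section

open MeasureTheory Metric Set Topology Filter

/-- The plane `ℝ²`. -/
abbrev Plane : Type := EuclideanSpace ℝ (Fin 2)

/-- A (plane) domain: a nonempty connected open set. -/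
def IsPlaneDomain (Ω : Set Plane) : Prop := IsOpen Ω ∧ IsConnected Ω

/-- `g` is a weak gradient of `u` on the open set `Ω`. -/
def IsWeakGradOn (Ω : Set Plane) (u : Plane → ℝ) (g : Plane → Plane) : Prop :=
  ∀ φ : Plane → ℝ, ContDiff ℝ (⊤ : ℕ∞) φ → HasCompactSupport φ → tsupport φ ⊆ Ω →
    ∀ i : Fin 2,
      ∫ x in Ω, u x * fderiv ℝ φ x (EuclideanSpace.single i 1) =
        - ∫ x in Ω, g x i * φ x

/-- Membership in the Dirichlet space `L¹₂(Ω)`: locally integrable with a square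
integrable weak gradient. -/
def MemL12 (Ω : Set Plane) (u : Plane → ℝ) : Prop :=
  LocallyIntegrableOn u Ω volume ∧
    ∃ g : Plane → Plane, IsWeakGradOn Ω u g ∧ MemLp g 2 (volume.restrict Ω)

/-- The Dirichlet energy `∫_Ω |∇u|²` of (a weak gradient) `g`. -/
def dirEnergy (Ω : Set Plane) (g : Plane → Plane) : ℝ := ∫ x in Ω, ‖g x‖ ^ 2

/-- The seminorm `‖u | L¹₂(Ω)‖ = ‖∇u | L²(Ω)‖`. -/
def dirNorm (Ω : Set Plane) (u : Plane → ℝ) : ℝ :=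
  sInf { c : ℝ | ∃ g : Plane → Plane, IsWeakGradOn Ω u g ∧
    MemLp g 2 (volume.restrict Ω) ∧ c = Real.sqrt (dirEnergy Ω g) }

/-- Energies of functions admissible for the condenser `(F₀, F₁; Ω)`: nonnegative
continuous functions of class `L¹₂(Ω)` vanishing on a neighborhood of `F₀` and `≥ 1`
on a neighborhood of `F₁`. -/
def capAdm (Ω F₀ F₁ : Set Plane) : Set ℝ :=
  { E : ℝ | ∃ (v : Plane → ℝ) (g : Plane → Plane),
      ContinuousOn v Ω ∧ (∀ x ∈ Ω, 0 ≤ v x) ∧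
      IsWeakGradOn Ω v g ∧ MemLp g 2 (volume.restrict Ω) ∧
      (∃ U : Set Plane, IsOpen U ∧ F₀ ⊆ U ∧ ∀ x ∈ U ∩ Ω, v x = 0) ∧
      (∃ U : Set Plane, IsOpen U ∧ F₁ ⊆ U ∧ ∀ x ∈ U ∩ Ω, 1 ≤ v x) ∧
      E = dirEnergy Ω g }

/-- The conformal capacity of the condenser `(F₀, F₁; Ω)`. -/
def cap2 (Ω F₀ F₁ : Set Plane) : ℝ := sInf (capAdm Ω F₀ F₁)

/-- The conformal capacity `cap(∂Ω, A; Ω)` of a set `A` relative to the boundary of `Ω`: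
here the admissible functions have compact support in `Ω`. -/
def capBd (Ω A : Set Plane) : ℝ :=
  sInf { E : ℝ | ∃ (v : Plane → ℝ) (g : Plane → Plane),
      ContinuousOn v Ω ∧ (∀ x ∈ Ω, 0 ≤ v x) ∧
      IsWeakGradOn Ω v g ∧ MemLp g 2 (volume.restrict Ω) ∧
      (∃ K : Set Plane, IsCompact K ∧ K ⊆ Ω ∧ ∀ x ∈ Ω \ K, v x = 0) ∧
      (∃ U : Set Plane, IsOpen U ∧ A ⊆ U ∧ ∀ x ∈ U ∩ Ω, 1 ≤ v x) ∧
      E = dirEnergy Ω g }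

/-- The conformal capacity `cap(E; Ω)` of a set `E ⊆ Ω`: the infimum of Dirichlet
energies of continuous compactly supported (in `Ω`) functions of class `L¹₂(Ω)`
which are `≥ 1` on `E`. -/
def capSet (Ω E : Set Plane) : ℝ :=
  sInf { c : ℝ | ∃ (v : Plane → ℝ) (g : Plane → Plane),
      ContinuousOn v Ω ∧
      IsWeakGradOn Ω v g ∧ MemLp g 2 (volume.restrict Ω) ∧
      (∃ K : Set Plane, IsCompact K ∧ K ⊆ Ω ∧ ∀ x ∈ Ω \ K, v x = 0) ∧
      (∀ x ∈ E, 1 ≤ v x) ∧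
      c = dirEnergy Ω g }

/-- `γ : [0,1] → Ω` is a curve in `Ω` joining `x` and `y`. -/
def JoinsIn (Ω : Set Plane) (γ : ℝ → Plane) (x y : Plane) : Prop :=
  ContinuousOn γ (Icc 0 1) ∧ γ 0 = x ∧ γ 1 = y ∧ γ '' Icc 0 1 ⊆ Ω

/-- A curve is rectifiable if it has finite variation on `[0,1]`. -/
def RectifiableCurve (γ : ℝ → Plane) : Prop := eVariationOn γ (Icc 0 1) ≠ ⊤

/-- The conformal capacitary distance `ρ_(F,V)(x,y)` in `Ω` associated with the pair
`(F, V)`. -/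
def capDist (Ω F V : Set Plane) (x y : Plane) : ℝ :=
  sInf { d : ℝ | ∃ γ : ℝ → Plane, JoinsIn Ω γ x y ∧ RectifiableCurve γ ∧
    d = Real.sqrt (cap2 Ω F (γ '' Icc 0 1 \ V)) +
        Real.sqrt (capBd Ω (γ '' Icc 0 1 ∩ V)) }

/-- `D` is a weak derivative of the mapping `φ : ℝ² → ℝ²` on `Ω`. -/
def IsWeakDerivOn (Ω : Set Plane) (φ : Plane → Plane)
    (D : Plane → Plane →L[ℝ] Plane) : Prop :=
  ∀ ψ : Plane → ℝ, ContDiff ℝ (⊤ : ℕ∞) ψ → HasCompactSupport ψ → tsupport ψ ⊆ Ω →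
    ∀ i j : Fin 2,
      ∫ x in Ω, φ x j * fderiv ℝ ψ x (EuclideanSpace.single i 1) =
        - ∫ x in Ω, D x (EuclideanSpace.single i 1) j * ψ x

/-- `φ` is a `K`-quasiconformal homeomorphism of `Ω` onto `Ω'`: an orientation
preserving homeomorphism of class `W^{1,2}_loc` satisfying the distortion inequality
`max_{|ξ|=1} |Dφ·ξ| ≤ K · min_{|ξ|=1} |Dφ·ξ|` a.e. in `Ω`. -/
def IsQCMap (K : ℝ) (Ω Ω' : Set Plane) (φ : Plane → Plane) : Prop :=
  1 ≤ K ∧ ContinuousOn φ Ω ∧ φ '' Ω = Ω' ∧ InjOn φ Ω ∧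
  ContinuousOn (Function.invFunOn φ Ω) Ω' ∧
  ∃ D : Plane → Plane →L[ℝ] Plane, IsWeakDerivOn Ω φ D ∧
    (∀ R : Set Plane, IsCompact R → R ⊆ Ω → MemLp D 2 (volume.restrict R)) ∧
    (∀ᵐ x ∂(volume.restrict Ω),
      0 ≤ (D x).det ∧
      ∀ ξ ζ : Plane, ‖ξ‖ = 1 → ‖ζ‖ = 1 → ‖D x ξ‖ ≤ K * ‖D x ζ‖)

/-- An admissible pair `(F, V)` for the conformal capacitary metric on `Ω`: `F` is a
continuum in `Ω`, `V` is a compact set with `F ⊆ V ⊆ closure V ⊆ Ω` whose boundary is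
the image of the unit circle under a quasiconformal homeomorphism of `ℝ²`. -/
def IsAdmPair (Ω F V : Set Plane) : Prop :=
  IsCompact F ∧ IsConnected F ∧ IsCompact V ∧ F ⊆ V ∧ closure V ⊆ Ω ∧
  ∃ (K : ℝ) (φ : Plane → Plane), IsQCMap K univ univ φ ∧
    frontier V = φ '' sphere (0 : Plane) 1

/-- `(X, ι)` is the metric completion of `Ω` with respect to the conformal capacitary
metric `ρ_(F,V)`. -/
def IsCapCompletion (Ω F V : Set Plane) (X : Type) [MetricSpace X]
    (ι : Plane → X) : Prop :=
  CompleteSpace X ∧ InjOn ι Ω ∧ Dense (ι '' Ω) ∧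
  ∀ x ∈ Ω, ∀ y ∈ Ω, dist (ι x) (ι y) = capDist Ω F V x y

/-- The realization (impression) `s_h` of a boundary element `h` of the capacitary
completion: `⋂_{ε>0} closure (D(h,ε) ∩ Ω)`. -/
def realization (Ω : Set Plane) {X : Type} [MetricSpace X] (ι : Plane → X)
    (h : X) : Set Plane :=
  ⋂ ε ∈ Ioi (0 : ℝ), closure (Ω ∩ ι ⁻¹' Metric.ball h ε)

/-- A function `f` is quasicontinuous on `S ⊆ ℝ²` (relative to the capacity of `Ω`):
for every `ε > 0` there is an open set of conformal capacity less than `ε` off which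
`f` is continuous. -/
def QuasiContOn (Ω S : Set Plane) (f : Plane → ℝ) : Prop :=
  ∀ ε > (0 : ℝ), ∃ U : Set Plane, IsOpen U ∧ capSet Ω (U ∩ Ω) < ε ∧
    ContinuousOn f (S \ U)

/-- A function `f` on the capacitary completion `X` of `Ω` is quasicontinuous:
for every `ε > 0` there is an open set `U ⊆ X` whose trace on `Ω` has conformal
capacity less than `ε` such that `f` is continuous off `U`. -/
def QuasiContOnCompletion (Ω : Set Plane) {X : Type} [MetricSpace X]
    (ι : Plane → X) (f : X → ℝ) : Prop :=
  ∀ ε > (0 : ℝ), ∃ U : Set X, IsOpen U ∧ capSet Ω (Ω ∩ ι ⁻¹' U) < ε ∧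
    ContinuousOn f Uᶜ

/-- `Ω` possesses the strong Luzin capacitary property with respect to the conformal
capacitary metric `ρ_(F,V)`: every `u ∈ L¹₂(Ω)` is uniformly continuous for `ρ_(F,V)`
outside an open set of arbitrarily small conformal capacity. -/
def StrongLuzin (Ω F V : Set Plane) : Prop :=
  ∀ u : Plane → ℝ, MemL12 Ω u → ∀ ε > (0 : ℝ),
    ∃ U : Set Plane, IsOpen U ∧ U ⊆ Ω ∧ capSet Ω U < ε ∧
      ∀ δ > (0 : ℝ), ∃ η > (0 : ℝ), ∀ x ∈ Ω \ U, ∀ y ∈ Ω \ U,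
        capDist Ω F V x y < η → |u x - u y| < δ

/-- `Ω` possesses the strong Luzin capacitary property (for every conformal
capacitary metric). -/
def HasStrongLuzin (Ω : Set Plane) : Prop :=
  ∀ F V : Set Plane, IsAdmPair Ω F V → StrongLuzin Ω F V

/-- `E` is a bounded linear extension operator `L¹₂(Ω) → L¹₂(ℝ²)` with norm (bound) `C`. -/
def IsExtensionOp (Ω : Set Plane) (E : (Plane → ℝ) → Plane → ℝ) (C : ℝ) : Prop :=
  0 < C ∧
  (∀ u v : Plane → ℝ, MemL12 Ω u → MemL12 Ω v → ∀ a b : ℝ,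
    E (fun x => a * u x + b * v x) = fun x => a * E u x + b * E v x) ∧
  ∀ u : Plane → ℝ, MemL12 Ω u →
    MemL12 univ (E u) ∧ EqOn (E u) u Ω ∧ dirNorm univ (E u) ≤ C * dirNorm Ω u

/-- `Ω` is a Sobolev `L¹₂`-extension domain. -/
def IsExtensionDomain (Ω : Set Plane) : Prop :=
  ∃ (E : (Plane → ℝ) → Plane → ℝ) (C : ℝ), IsExtensionOp Ω E C

/-- `Ω` is a Sobolev `L¹₂`-quasi-extension domain: removing a closed set of arbitrarily
small conformal capacity leaves an `L¹₂`-extension domain. -/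
def IsQuasiExtensionDomain (Ω : Set Plane) : Prop :=
  ∀ ε > (0 : ℝ), ∃ U : Set Plane, IsOpen U ∧ capSet Ω (U ∩ Ω) < ε ∧
    IsExtensionDomain (Ω \ closure U)

/-- `Ω` is locally connected at the boundary point `x`: `x` has arbitrarily small
connected neighborhoods in `Ω`. -/
def LocallyConnectedAt (Ω : Set Plane) (x : Plane) : Prop :=
  ∀ ε > (0 : ℝ), ∃ U : Set Plane, IsOpen U ∧ x ∈ U ∧ U ⊆ Metric.ball x ε ∧
    IsConnected (U ∩ Ω)


/-- Auxiliary reparametrization: travels from `1` back to `0` on `[0,1/2]` and then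
from `0` to `t` on `[1/2,1]`. -/
def auxMap (t : ℝ) : ℝ → ℝ := fun s => if s ≤ 1/2 then 1 - 2*s else 2*t*(s - 1/2)

lemma auxMap_cont (t : ℝ) : Continuous (auxMap t) := by
  unfold auxMap
  exact Continuous.if_le (by continuity) (by continuity) continuous_id continuous_const
    (fun s hs => by rw [hs]; norm_num)

lemma auxMap_mapsTo {t : ℝ} (ht : t ∈ Icc (0:ℝ) 1) :
    MapsTo (auxMap t) (Icc 0 1) (Icc 0 1) := by
  intro s hs
  unfold auxMap
  by_cases hhalf : s ≤ 1/2
  · rw [if_pos hhalf]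
    exact ⟨by linarith [hs.1], by linarith [hs.1]⟩
  · rw [if_neg hhalf]
    push_neg at hhalf
    constructor
    · nlinarith [ht.1, hs.2]
    · nlinarith [ht.1, ht.2, hs.2]

lemma auxMap_image {t : ℝ} (ht : t ∈ Icc (0:ℝ) 1) :
    auxMap t '' Icc 0 1 = Icc 0 1 := by
  refine Subset.antisymm ((auxMap_mapsTo ht).image_subset) ?_
  intro u hu
  refine ⟨(1-u)/2, ⟨by linarith [hu.2], by linarith [hu.1]⟩, ?_⟩
  unfold auxMap
  rw [if_pos (by linarith [hu.1] : (1-u)/2 ≤ 1/2)]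
  ring

lemma auxMap_anti (t : ℝ) : AntitoneOn (auxMap t) (Icc 0 (1/2)) := by
  intro a ha b hb hab
  unfold auxMap
  rw [if_pos ha.2, if_pos hb.2]
  linarith

lemma auxMap_mono {t : ℝ} (ht : t ∈ Icc (0:ℝ) 1) :
    MonotoneOn (auxMap t) (Icc (1/2) 1) := by
  intro a ha b hb hab
  unfold auxMap
  by_cases haa : a ≤ 1/2 <;> by_cases hbb : b ≤ 1/2 <;>
    simp only [if_pos, if_neg, haa, hbb, if_true, if_false]
  · linarith [ha.1, hb.1]
  · push_neg at hbb; nlinarith [ht.1, ha.1, hb.1]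
  · push_neg at haa; linarith
  · push_neg at haa hbb; nlinarith [ht.1]

/-- Key lemma: if `γ` is a rectifiable curve joining `x` and `y` in `Ω`, then the
capacitary distance from `y` to any point `γ t` on the curve is bounded by the
quantity associated with the full curve, since the curve from `y` backwards to `x`
and then forwards to `γ t` has exactly the same image. -/
lemma capDist_le_of_curve (Ω F V : Set Plane) {γ : ℝ → Plane} {x y : Plane}
    (hj : JoinsIn Ω γ x y) (hrect : RectifiableCurve γ) {t : ℝ} (ht : t ∈ Icc (0:ℝ) 1) :
    capDist Ω F V y (γ t) ≤
      Real.sqrt (cap2 Ω F (γ '' Icc 0 1 \ V)) + Real.sqrt (capBd Ω (γ '' Icc 0 1 ∩ V)) := by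
  obtain ⟨hcont, hγ0, hγ1, himΩ⟩ := hj
  set η : ℝ → Plane := γ ∘ auxMap t with hη
  have him : η '' Icc 0 1 = γ '' Icc 0 1 := by
    rw [hη, image_comp, auxMap_image ht]
  have hjoin : JoinsIn Ω η y (γ t) := by
    refine ⟨hcont.comp (auxMap_cont t).continuousOn (auxMap_mapsTo ht), ?_, ?_, ?_⟩
    · show γ (auxMap t 0) = y
      have : auxMap t 0 = 1 := by unfold auxMap; norm_num
      rw [this, hγ1]
    · show γ (auxMap t 1) = γ t
      have : auxMap t 1 = t := by
        unfold auxMap; rw [if_neg (by norm_num)]; ring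
      rw [this]
    · rw [him]; exact himΩ
  have hrectη : RectifiableCurve η := by
    unfold RectifiableCurve at hrect ⊢
    have h1 : eVariationOn η (Icc 0 (1/2)) ≤ eVariationOn γ (Icc 0 1) :=
      eVariationOn.comp_le_of_antitoneOn γ (auxMap t) (auxMap_anti t)
        (fun s hs => auxMap_mapsTo ht ⟨hs.1, by linarith [hs.2]⟩)
    have h2 : eVariationOn η (Icc (1/2) 1) ≤ eVariationOn γ (Icc 0 1) :=
      eVariationOn.comp_le_of_monotoneOn γ (auxMap t) (auxMap_mono ht)
        (fun s hs => auxMap_mapsTo ht ⟨by linarith [hs.1], hs.2⟩)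
    have h3 := eVariationOn.Icc_add_Icc η (s := univ)
      (by norm_num : (0:ℝ) ≤ 1/2) (by norm_num : (1:ℝ)/2 ≤ 1) (mem_univ _)
    simp only [univ_inter] at h3
    rw [← h3]
    exact ENNReal.add_ne_top.2 ⟨ne_top_of_le_ne_top hrect h1, ne_top_of_le_ne_top hrect h2⟩
  refine csInf_le ⟨0, ?_⟩ ⟨η, hjoin, hrectη, by rw [him]⟩
  rintro d ⟨γ', -, -, rfl⟩
  positivity

/-- If the realization `s_h` of a boundary element `h ∈ H_ρ`
consists of a single point `p`, then for every sequence `(x_m)` in `Ω`,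
`ρ_(F,V)(x_m, h) → 0` implies `|x_m − p| → 0`. -/
theorem tendsto_realization_of_capDist_tendsto
    (Ω : Set Plane) (hΩ : IsPlaneDomain Ω)
    (F V : Set Plane) (hFV : IsAdmPair Ω F V)
    (X : Type) [MetricSpace X] (ι : Plane → X) (hX : IsCapCompletion Ω F V X ι)
    (h : X) (hb : h ∉ ι '' Ω)
    (p : Plane) (hp : realization Ω ι h = {p}) :
    ∀ x : ℕ → Plane, (∀ m, x m ∈ Ω) →
      Tendsto (fun m => dist (ι (x m)) h) atTop (nhds 0) →
      Tendsto (fun m => dist (x m) p) atTop (nhds 0) := by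
  intro x hxΩ hdist
  obtain ⟨hcomp, hinj, hdense, hd⟩ := hX
  by_contra hcon
  have hdist' : ∀ ε > (0:ℝ), ∃ N, ∀ n ≥ N, dist (ι (x n)) h < ε := by
    intro ε hε
    obtain ⟨N, hN⟩ := Metric.tendsto_atTop.1 hdist ε hε
    exact ⟨N, fun n hn => by
      have := hN n hn
      rwa [Real.dist_eq, sub_zero, abs_of_nonneg dist_nonneg] at this⟩
  rw [Metric.tendsto_atTop] at hcon
  push_neg at hcon
  obtain ⟨r, hr, hcon⟩ := hcon
  have hbad : ∀ N, ∃ n ≥ N, r ≤ dist (x n) p := by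
    intro N
    obtain ⟨n, hn, hge⟩ := hcon N
    rw [Real.dist_eq, sub_zero, abs_of_nonneg dist_nonneg] at hge
    exact ⟨n, hn, hge⟩
  have hpmem : ∀ ε > (0:ℝ), p ∈ closure (Ω ∩ ι ⁻¹' Metric.ball h ε) := by
    intro ε hε
    have hpreal : p ∈ realization Ω ι h := by rw [hp]; exact mem_singleton _
    exact Set.mem_iInter₂.1 hpreal ε hε
  have key : ∀ k : ℕ, ∃ z, z ∈ Ω ∧ dist (ι z) h < 3 / ((k:ℝ)+1) ∧ dist z p = r/2 := by
    intro k
    have hεpos : (0:ℝ) < 1/((k:ℝ)+1) := by positivity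
    obtain ⟨N, hN⟩ := hdist' (1/((k:ℝ)+1)) hεpos
    obtain ⟨n, hn, hnr⟩ := hbad N
    obtain ⟨y, hy, hpy⟩ := Metric.mem_closure_iff.1 (hpmem (1/((k:ℝ)+1)) hεpos) (r/2)
      (by linarith)
    have hyΩ : y ∈ Ω := hy.1
    have hyh : dist (ι y) h < 1/((k:ℝ)+1) := by
      have := hy.2
      rwa [mem_preimage, Metric.mem_ball] at this
    have haΩ := hxΩ n
    have hah : dist (ι (x n)) h < 1/((k:ℝ)+1) := hN n hn
    have hay : dist (ι (x n)) (ι y) < 2/((k:ℝ)+1) := by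
      calc dist (ι (x n)) (ι y) ≤ dist (ι (x n)) h + dist (ι y) h := dist_triangle_right _ _ _
      _ < 1/((k:ℝ)+1) + 1/((k:ℝ)+1) := by linarith
      _ = 2/((k:ℝ)+1) := by ring
    have hcap : capDist Ω F V (x n) y < 2/((k:ℝ)+1) := by
      rw [← hd (x n) haΩ y hyΩ]; exact hay
    set S := { d : ℝ | ∃ γ : ℝ → Plane, JoinsIn Ω γ (x n) y ∧ RectifiableCurve γ ∧
      d = Real.sqrt (cap2 Ω F (γ '' Icc 0 1 \ V)) +
          Real.sqrt (capBd Ω (γ '' Icc 0 1 ∩ V)) } with hS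
    have hcapS : capDist Ω F V (x n) y = sInf S := rfl
    have hSne : S.Nonempty := by
      by_contra hSe
      rw [Set.not_nonempty_iff_eq_empty] at hSe
      have h0 : capDist Ω F V (x n) y = 0 := by rw [hcapS, hSe, Real.sInf_empty]
      have hxy : ι (x n) = ι y := by
        rw [← dist_eq_zero, hd (x n) haΩ y hyΩ, h0]
      have hxy2 : x n = y := hinj haΩ hyΩ hxy
      rw [hxy2, dist_comm] at hnr
      linarith
    have hbdd : BddBelow S := ⟨0, by rintro d ⟨γ', -, -, rfl⟩; positivity⟩
    have hlt : sInf S < 2/((k:ℝ)+1) := by rw [← hcapS]; exact hcap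
    obtain ⟨d, hdS, hdlt⟩ := (csInf_lt_iff hbdd hSne).1 hlt
    obtain ⟨γ, hjoin, hrect, rfl⟩ := hdS
    have hgc : ContinuousOn (fun s => dist (γ s) p) (Icc 0 1) :=
      (continuous_id.dist continuous_const).comp_continuousOn hjoin.1
    have h0v : r ≤ dist (γ 0) p := by rw [hjoin.2.1]; exact hnr
    have h1v : dist (γ 1) p < r/2 := by rw [hjoin.2.2.1, dist_comm]; exact hpy
    obtain ⟨t, htI, htv⟩ := intermediate_value_Icc' (by norm_num : (0:ℝ) ≤ 1) hgc
      (⟨le_of_lt h1v, by linarith⟩ : r/2 ∈ Icc (dist (γ 1) p) (dist (γ 0) p))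
    have hzΩ : γ t ∈ Ω := hjoin.2.2.2 ⟨t, htI, rfl⟩
    have hyz := capDist_le_of_curve Ω F V hjoin hrect htI
    have hιyz : dist (ι y) (ι (γ t)) < 2/((k:ℝ)+1) := by
      rw [hd y hyΩ (γ t) hzΩ]
      exact lt_of_le_of_lt hyz hdlt
    refine ⟨γ t, hzΩ, ?_, htv⟩
    calc dist (ι (γ t)) h ≤ dist (ι (γ t)) (ι y) + dist (ι y) h := dist_triangle _ _ _
    _ < 2/((k:ℝ)+1) + 1/((k:ℝ)+1) := by
        rw [dist_comm]
        exact add_lt_add hιyz hyh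
    _ = 3/((k:ℝ)+1) := by ring
  choose z hzΩ hz3 hzr using key
  have hsph : ∀ k, z k ∈ Metric.sphere p (r/2) := fun k => by
    rw [Metric.mem_sphere]; exact hzr k
  obtain ⟨q, hq, φ, hφ, htend⟩ := (isCompact_sphere p (r/2)).tendsto_subseq hsph
  have hqreal : q ∈ realization Ω ι h := by
    refine Set.mem_iInter₂.2 fun δ hδ => ?_
    have hδ0 : (0:ℝ) < δ := hδ
    refine mem_closure_of_tendsto htend ?_
    rw [Filter.eventually_atTop]
    refine ⟨⌈3/δ⌉₊, fun k hk => ?_⟩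
    refine ⟨hzΩ (φ k), ?_⟩
    rw [mem_preimage, Metric.mem_ball]
    have h1 : (3:ℝ)/δ ≤ (k:ℝ) := le_trans (Nat.le_ceil _) (by exact_mod_cast hk)
    have h2 : (k:ℝ) ≤ (φ k : ℝ) := by exact_mod_cast hφ.le_apply
    have h3 : (3:ℝ)/((φ k:ℝ)+1) < δ := by
      have hφpos : (0:ℝ) < (φ k:ℝ)+1 := by positivity
      have h4 : 3/δ < (φ k:ℝ)+1 := by linarith
      have h5 : (3:ℝ) < ((φ k:ℝ)+1)*δ := by
        have h6 := mul_lt_mul_of_pos_right h4 hδ0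
        rwa [div_mul_cancel₀ _ (ne_of_gt hδ0)] at h6
      rw [div_lt_iff₀ hφpos]
      linarith
    exact lt_trans (hz3 (φ k)) h3
  rw [hp] at hqreal
  have hqp : q = p := hqreal
  rw [Metric.mem_sphere, hqp, dist_self] at hq
  linarith
end
end

section
/- Let Ω be a domain in ℝ² that is locally connected at a point x ∈ ∂Ω (i.e., x has arbitrarily small connected neighborhoods in Ω), and suppose x ∈ s_h for some boundary element h ∈ H_ρ of the conformal capacitary boundary. Then for every sequence (x_m) in Ω with |x_m − x| → 0 one has ρ_(F,V)(x_m, h) → 0 as m → ∞. -/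
noncomputable section

open MeasureTheory Metric Set Topology Filter

section AuxLemmas
set_option linter.unusedSectionVars false

lemma exists_smoothTransition_bound :
    ∃ B : ℝ, 0 ≤ B ∧ (∀ t, |deriv Real.smoothTransition t| ≤ B) ∧
      LipschitzWith B.toNNReal Real.smoothTransition := by
  obtain ⟨C, hC⟩ := (isCompact_Icc (a := (-1:ℝ)) (b := 2)).exists_bound_of_continuousOn
    ((Real.smoothTransition.contDiff (n := 1)).continuous_deriv le_rfl).continuousOn
  have hbound : ∀ t, |deriv Real.smoothTransition t| ≤ max C 0 := by
    intro t
    rcases le_or_gt t (-1) with ht | ht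
    · have : deriv Real.smoothTransition t = 0 := by
        have h0 : Real.smoothTransition =ᶠ[nhds t] fun _ => (0:ℝ) := by
          filter_upwards [Iio_mem_nhds (show t < 0 by linarith)] with s hs
          exact Real.smoothTransition.zero_of_nonpos (le_of_lt hs)
        rw [h0.deriv_eq, deriv_const]
      simp [this]
    · rcases le_or_gt t 2 with ht2 | ht2
      · exact le_trans (by simpa using hC t ⟨le_of_lt ht, ht2⟩) (le_max_left _ _)
      · have : deriv Real.smoothTransition t = 0 := by
          have h0 : Real.smoothTransition =ᶠ[nhds t] fun _ => (1:ℝ) := by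
            filter_upwards [Ioi_mem_nhds (show (1:ℝ) < t by linarith)] with s hs
            exact Real.smoothTransition.one_of_one_le (le_of_lt hs)
          rw [h0.deriv_eq, deriv_const]
        simp [this]
  refine ⟨max C 0, le_max_right _ _, hbound, ?_⟩
  refine lipschitzWith_of_nnnorm_deriv_le
    ((Real.smoothTransition.contDiff (n := 1)).differentiable (by simp)) (fun t => ?_)
  rw [← NNReal.coe_le_coe, coe_nnnorm, Real.coe_toNNReal _ (le_max_right _ _), Real.norm_eq_abs]
  exact hbound t

-- log lipschitz on Ici s
lemma lipschitzOnWith_log {s : ℝ} (hs : 0 < s) :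
    LipschitzOnWith s⁻¹.toNNReal Real.log (Ici s) := by
  rw [lipschitzOnWith_iff_dist_le_mul]
  intro a ha b hb
  rw [Real.dist_eq, Real.dist_eq, Real.coe_toNNReal _ (inv_nonneg.2 hs.le)]
  have key : ∀ u v : ℝ, s ≤ u → s ≤ v → v ≤ u → Real.log u - Real.log v ≤ s⁻¹ * |u - v| := by
    intro u v hu hv hvu
    have hv0 : 0 < v := lt_of_lt_of_le hs hv
    have hu0 : 0 < u := lt_of_lt_of_le hs hu
    have : Real.log u - Real.log v = Real.log (u / v) := (Real.log_div (by positivity) (by positivity)).symm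
    rw [this]
    calc Real.log (u / v) ≤ u / v - 1 := Real.log_le_sub_one_of_pos (by positivity)
      _ = (u - v) / v := by field_simp
      _ ≤ (u - v) / s := by
          gcongr
      _ ≤ s⁻¹ * |u - v| := by
          rw [div_eq_inv_mul]
          exact mul_le_mul_of_nonneg_left (le_abs_self _) (inv_nonneg.2 hs.le)
  rcases le_total b a with h | h
  · rw [abs_of_nonneg (by linarith [Real.log_le_log (lt_of_lt_of_le hs hb) (by linarith : b ≤ a)] : (0:ℝ) ≤ Real.log a - Real.log b)]
    exact key a b ha hb h
  · rw [abs_of_nonpos (by linarith [Real.log_le_log (lt_of_lt_of_le hs ha) (by linarith : a ≤ b)] : Real.log a - Real.log b ≤ 0), abs_sub_comm]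
    simpa using key b a hb ha h

noncomputable def cutoff (x : Plane) (R r L : ℝ) : Plane → ℝ :=
  fun z => Real.smoothTransition ((Real.log R - Real.log (max (dist z x) (r/2))) / L)

section cutoff
variable {x : Plane} {R r L : ℝ} (hr : 0 < r) (hrR : r < R) (hL : 0 < L)
  (hLval : L = Real.log R - Real.log r)

lemma cutoff_nonneg (z : Plane) : 0 ≤ cutoff x R r L z := Real.smoothTransition.nonneg _
lemma cutoff_le_one (z : Plane) : cutoff x R r L z ≤ 1 := Real.smoothTransition.le_one _

include hr hL hLval in
lemma cutoff_one {z : Plane} (hz : dist z x ≤ r) : cutoff x R r L z = 1 := by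
  apply Real.smoothTransition.one_of_one_le
  rw [le_div_iff₀ hL, one_mul, hLval]
  have h1 : max (dist z x) (r/2) ≤ r := max_le hz (by linarith)
  have h2 : 0 < max (dist z x) (r/2) := lt_of_lt_of_le (by linarith) (le_max_right _ _)
  have := Real.log_le_log h2 h1
  linarith

include hr hrR hL in
lemma cutoff_zero {z : Plane} (hz : R ≤ dist z x) : cutoff x R r L z = 0 := by
  apply Real.smoothTransition.zero_of_nonpos
  apply div_nonpos_of_nonpos_of_nonneg _ hL.le
  have h1 : R ≤ max (dist z x) (r/2) := le_trans hz (le_max_left _ _)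
  have := Real.log_le_log (by linarith : (0:ℝ) < R) h1
  linarith

include hr hrR hL hLval in
lemma cutoff_contDiff : ContDiff ℝ 1 (cutoff x R r L) := by
  rw [contDiff_iff_contDiffAt]
  intro z₀
  rcases lt_or_ge (dist z₀ x) r with h | h
  · apply ContDiffAt.congr_of_eventuallyEq contDiffAt_const
    filter_upwards [IsOpen.mem_nhds isOpen_ball (mem_ball.2 h)] with z hz
    exact cutoff_one hr hL hLval (le_of_lt (mem_ball.1 hz))
  · have hpos : r/2 < dist z₀ x := by linarith
    have hform : ContDiffAt ℝ 1
        (fun z => Real.smoothTransition ((Real.log R - Real.log (dist z x)) / L)) z₀ := by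
      apply Real.smoothTransition.contDiff.contDiffAt.comp
      apply ContDiffAt.div_const
      apply ContDiffAt.sub contDiffAt_const
      have hdist : ContDiffAt ℝ 1 (fun z : Plane => dist z x) z₀ := by
        have : (fun z : Plane => dist z x) = fun z : Plane => ‖z - x‖ := by
          funext z; exact dist_eq_norm z x
        rw [this]
        exact (contDiffAt_norm (𝕜 := ℝ) (show z₀ - x ≠ 0 by
          intro hc
          rw [show (z₀ - x = 0) ↔ z₀ = x from sub_eq_zero] at hc
          rw [hc, dist_self] at hpos; linarith)).comp z₀
          (contDiffAt_id.sub contDiffAt_const)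
      exact (Real.contDiffAt_log.mpr (ne_of_gt (by linarith : (0:ℝ) < dist z₀ x))).comp z₀ hdist
    apply hform.congr_of_eventuallyEq
    filter_upwards [IsOpen.mem_nhds (isOpen_lt continuous_const (continuous_id.dist continuous_const)) hpos] with z hz
    unfold cutoff
    rw [max_eq_left (le_of_lt (show r/2 < dist z x from hz))]
end cutoff

section cutoff2
variable {x : Plane} {R r L : ℝ} (hr : 0 < r) (hrR : r < R) (hL : 0 < L)
  (hLval : L = Real.log R - Real.log r)

include hr hL hLval in
lemma fderiv_cutoff_inner {z : Plane} (hz : dist z x < r) :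
    fderiv ℝ (cutoff x R r L) z = 0 := by
  have h : cutoff x R r L =ᶠ[nhds z] fun _ => (1:ℝ) := by
    filter_upwards [IsOpen.mem_nhds isOpen_ball (mem_ball.2 hz)] with z' hz'
    exact cutoff_one hr hL hLval (le_of_lt (mem_ball.1 hz'))
  rw [h.fderiv_eq, fderiv_fun_const]; rfl

include hr hrR hL in
lemma fderiv_cutoff_outer {z : Plane} (hz : R < dist z x) :
    fderiv ℝ (cutoff x R r L) z = 0 := by
  have h : cutoff x R r L =ᶠ[nhds z] fun _ => (0:ℝ) := by
    filter_upwards [IsOpen.mem_nhds (isOpen_lt continuous_const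
      (continuous_id.dist continuous_const)) hz] with z' hz'
    exact cutoff_zero hr hrR hL (le_of_lt hz')
  rw [h.fderiv_eq, fderiv_fun_const]; rfl

lemma lipschitzWith_max_const (c : ℝ) : LipschitzWith 1 (fun t : ℝ => max t c) := by
  apply LipschitzWith.of_dist_le_mul
  intro a b
  rw [Real.dist_eq, Real.dist_eq, NNReal.coe_one, one_mul]
  exact abs_max_sub_max_le_abs a b c

lemma lipschitzWith_affine_div {c L : ℝ} (hL : 0 < L) :
    LipschitzWith L⁻¹.toNNReal (fun t : ℝ => (c - t) / L) := by
  apply LipschitzWith.of_dist_le_mul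
  intro a b
  rw [Real.dist_eq, Real.dist_eq, Real.coe_toNNReal _ (inv_nonneg.2 hL.le)]
  rw [div_sub_div_same, show c - a - (c - b) = -(a - b) by ring, abs_div, abs_neg,
    abs_of_pos hL, div_eq_inv_mul]

include hr hL in
lemma norm_fderiv_cutoff_le {B : ℝ} (hB : 0 ≤ B)
    (hlip : LipschitzWith B.toNNReal Real.smoothTransition)
    {s : ℝ} (hs : 0 < s) {z : Plane} (hz : s < dist z x) :
    ‖fderiv ℝ (cutoff x R r L) z‖ ≤ B / (L * s) := by
  set f₁ : Plane → ℝ := fun z => max (dist z x) (r/2) with hf₁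
  have hf₁lip : LipschitzWith (1 * 1) f₁ :=
    (lipschitzWith_max_const (r/2)).comp (LipschitzWith.dist_left x)
  have hmaps : Set.MapsTo f₁ {z : Plane | s ≤ dist z x} (Ici s) := by
    intro z' hz'
    exact le_trans (show s ≤ dist z' x from hz') (le_max_left _ _)
  have H1 : LipschitzOnWith ((B.toNNReal * L⁻¹.toNNReal) * s⁻¹.toNNReal)
      ((Real.smoothTransition ∘ (fun t => (Real.log R - t) / L)) ∘ Real.log) (Ici s) :=
    (hlip.comp (lipschitzWith_affine_div hL)).comp_lipschitzOnWith (lipschitzOnWith_log hs)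
  have H2 : LipschitzOnWith (((B.toNNReal * L⁻¹.toNNReal) * s⁻¹.toNNReal) * (1 * 1))
      (cutoff x R r L) {z : Plane | s ≤ dist z x} := H1.comp hf₁lip.lipschitzOnWith hmaps
  have hnbhd : {z : Plane | s ≤ dist z x} ∈ nhds z := by
    apply mem_of_superset (IsOpen.mem_nhds (isOpen_lt continuous_const
      (continuous_id.dist continuous_const)) hz)
    intro z' hz'; exact le_of_lt (show s < dist z' x from hz')
  have := norm_fderiv_le_of_lipschitzOn ℝ hnbhd H2
  refine le_trans this ?_
  push_cast
  rw [Real.coe_toNNReal _ hB, Real.coe_toNNReal _ (inv_nonneg.2 hL.le),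
    Real.coe_toNNReal _ (inv_nonneg.2 hs.le)]
  rw [div_eq_mul_inv, mul_inv]
  ring_nf
  exact le_rfl
end cutoff2

noncomputable def gvec (x : Plane) (R r L : ℝ) : Plane → Plane :=
  fun z => (WithLp.equiv 2 (Fin 2 → ℝ)).symm
    (fun i => fderiv ℝ (cutoff x R r L) z (EuclideanSpace.single i 1))

section gvec
variable {x : Plane} {R r L : ℝ} (hr : 0 < r) (hrR : r < R) (hL : 0 < L)
  (hLval : L = Real.log R - Real.log r)

lemma gvec_apply (z : Plane) (i : Fin 2) :
    gvec x R r L z i = fderiv ℝ (cutoff x R r L) z (EuclideanSpace.single i 1) := rfl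

include hr hrR hL hLval in
lemma gvec_continuous : Continuous (gvec x R r L) := by
  have hfd : Continuous (fderiv ℝ (cutoff x R r L)) :=
    (cutoff_contDiff hr hrR hL hLval).continuous_fderiv (by simp)
  have h : Continuous fun z => (fun i => fderiv ℝ (cutoff x R r L) z (EuclideanSpace.single i 1) :
      Fin 2 → ℝ) := continuous_pi fun i => hfd.clm_apply continuous_const
  exact (PiLp.continuous_toLp 2 (fun _ : Fin 2 => ℝ)).comp h

lemma gvec_eq_zero {z : Plane} (hz : fderiv ℝ (cutoff x R r L) z = 0) :
    gvec x R r L z = 0 := by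
  ext i
  show fderiv ℝ (cutoff x R r L) z (EuclideanSpace.single i 1) = 0
  rw [hz]; rfl

include hr hrR hL in
lemma gvec_hasCompactSupport : HasCompactSupport (gvec x R r L) := by
  apply HasCompactSupport.intro (isCompact_closedBall x R)
  intro z hz
  have : R < dist z x := by
    simp only [mem_closedBall, not_le] at hz
    exact hz
  exact gvec_eq_zero (fderiv_cutoff_outer hr hrR hL this)

lemma gvec_norm_sq_le (z : Plane) :
    ‖gvec x R r L z‖^2 ≤ 2 * ‖fderiv ℝ (cutoff x R r L) z‖^2 := by
  have h1 : ‖gvec x R r L z‖ = Real.sqrt (∑ i, ‖gvec x R r L z i‖^2) :=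
    EuclideanSpace.norm_eq _
  have hcoord : ∀ i : Fin 2, ‖gvec x R r L z i‖ ≤ ‖fderiv ℝ (cutoff x R r L) z‖ := by
    intro i
    rw [gvec_apply]
    calc ‖fderiv ℝ (cutoff x R r L) z (EuclideanSpace.single i 1)‖
        ≤ ‖fderiv ℝ (cutoff x R r L) z‖ * ‖EuclideanSpace.single i (1:ℝ)‖ :=
          ContinuousLinearMap.le_opNorm _ _
      _ = ‖fderiv ℝ (cutoff x R r L) z‖ := by rw [EuclideanSpace.norm_single]; simp
  rw [h1, Real.sq_sqrt (Finset.sum_nonneg fun i _ => sq_nonneg _), Fin.sum_univ_two]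
  have h2 := hcoord 0; have h3 := hcoord 1
  have n0 : (0:ℝ) ≤ ‖gvec x R r L z 0‖ := norm_nonneg _
  have n1 : (0:ℝ) ≤ ‖gvec x R r L z 1‖ := norm_nonneg _
  nlinarith

include hr hrR hL hLval in
lemma gvec_memℒp (Ω : Set Plane) : MemLp (gvec x R r L) 2 (volume.restrict Ω) :=
  ((gvec_continuous hr hrR hL hLval).memLp_of_hasCompactSupport
    (gvec_hasCompactSupport hr hrR hL)).restrict Ω
end gvec


section weak
variable {x : Plane} {R r L : ℝ} (hr : 0 < r) (hrR : r < R) (hL : 0 < L)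
  (hLval : L = Real.log R - Real.log r)

include hr hrR hL hLval in
lemma cutoff_isWeakGradOn (Ω : Set Plane) : IsWeakGradOn Ω (cutoff x R r L) (gvec x R r L) := by
  intro φ hφ hφc hφs i
  set w := cutoff x R r L with hw
  have hwc : Continuous w := (cutoff_contDiff hr hrR hL hLval).continuous
  have hwd : Differentiable ℝ w := (cutoff_contDiff hr hrR hL hLval).differentiable (by simp)
  have hφd : Differentiable ℝ φ := hφ.differentiable (by simp)
  have hφcont : Continuous φ := hφ.continuous
  have hfdφ : Continuous fun z => fderiv ℝ φ z (EuclideanSpace.single i 1) :=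
    (hφ.continuous_fderiv (by simp)).clm_apply continuous_const
  have hfdw : Continuous fun z => fderiv ℝ w z (EuclideanSpace.single i 1) :=
    ((cutoff_contDiff hr hrR hL hLval).continuous_fderiv (by simp)).clm_apply continuous_const
  have hcs_fdφ : HasCompactSupport fun z => fderiv ℝ φ z (EuclideanSpace.single i 1) :=
    (hφc.fderiv ℝ).comp_left (g := fun l : Plane →L[ℝ] ℝ => l (EuclideanSpace.single i 1)) rfl
  -- integrability
  have int1 : Integrable (fun z => w z * fderiv ℝ φ z (EuclideanSpace.single i 1)) volume :=
    ((hwc.mul hfdφ)).integrable_of_hasCompactSupport (hcs_fdφ.mul_left)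
  have int2 : Integrable (fun z => fderiv ℝ w z (EuclideanSpace.single i 1) * φ z) volume :=
    ((hfdw.mul hφcont)).integrable_of_hasCompactSupport (hφc.mul_left)
  have int3 : Integrable (fun z => w z * φ z) volume :=
    ((hwc.mul hφcont)).integrable_of_hasCompactSupport (hφc.mul_left)
  have key := integral_mul_fderiv_eq_neg_fderiv_mul_of_integrable
    (f := w) (g := φ) (v := EuclideanSpace.single i 1) int2 int1 int3 (fun z _ => hwd z) (fun z _ => hφd z)
  have e1 : ∫ z in Ω, w z * fderiv ℝ φ z (EuclideanSpace.single i 1)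
      = ∫ z, w z * fderiv ℝ φ z (EuclideanSpace.single i 1) := by
    apply setIntegral_eq_integral_of_forall_compl_eq_zero
    intro z hz
    have : z ∉ tsupport φ := fun hc => hz (hφs hc)
    have hz2 : fderiv ℝ φ z = 0 :=
      image_eq_zero_of_notMem_tsupport fun hc => this (tsupport_fderiv_subset ℝ hc)
    rw [hz2]; simp
  have e2 : ∫ z in Ω, gvec x R r L z i * φ z
      = ∫ z, fderiv ℝ w z (EuclideanSpace.single i 1) * φ z := by
    apply setIntegral_eq_integral_of_forall_compl_eq_zero
    intro z hz
    have : z ∉ tsupport φ := fun hc => hz (hφs hc)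
    rw [image_eq_zero_of_notMem_tsupport this]
    simp
  rw [e1, e2, key]
end weak


section energy
variable {x : Plane} {R : ℝ} (hR : 0 < R) {B : ℝ} (hB : 0 ≤ B)
  (hlip : LipschitzWith B.toNNReal Real.smoothTransition)

-- the dyadic shell decomposition
include hR hB hlip in
lemma dirEnergy_cutoff_le (n : ℕ) (hn : 1 ≤ n) (Ω : Set Plane) :
    dirEnergy Ω (gvec x R (R/2^n) (n * Real.log 2)) ≤
      (n+1) * (128 * B^2 * (Real.sqrt Real.pi ^ 2 / Real.Gamma (2/2+1))) /
        (n * Real.log 2)^2 := by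
  set κ' : ℝ := Real.sqrt Real.pi ^ 2 / Real.Gamma (2/2+1) with hκdef
  have hκ : 0 ≤ κ' := by
    apply div_nonneg (sq_nonneg _) (Real.Gamma_pos_of_pos (by norm_num)).le
  set r : ℝ := R / 2^n with hrdef
  set L : ℝ := n * Real.log 2 with hLdef
  have hr : 0 < r := by positivity
  have hrR : r < R := by
    have h2n : (2:ℝ)^1 ≤ 2^n := pow_le_pow_right₀ one_le_two hn
    rw [hrdef]
    exact div_lt_self hR (by norm_num at h2n ⊢; linarith)
  have hL : 0 < L := by
    rw [hLdef]
    have := Real.log_pos (by norm_num : (1:ℝ) < 2)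
    positivity
  have hLval : L = Real.log R - Real.log r := by
    rw [hrdef, Real.log_div hR.ne' (by positivity), Real.log_pow]
    push_cast; ring
  set g := gvec x R r L with hg
  set w := cutoff x R r L with hw
  set S : ℕ → Set Plane := (fun k => {z : Plane | R/2^(k+1) ≤ dist z x ∧ dist z x ≤ R/2^k}) with hS
  set c : ℕ → ENNReal := fun k => ENNReal.ofReal (2 * (B/(L * (R/2^(k+2))))^2) with hc
  -- pointwise bound
  have P : ∀ z, ENNReal.ofReal (‖g z‖^2) ≤
      ∑ k ∈ Finset.range (n+1), (S k).indicator (fun _ => c k) z := by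
    intro z
    rcases lt_or_ge (dist z x) r with hd | hd
    · have : g z = 0 := gvec_eq_zero (fderiv_cutoff_inner hr hL hLval hd)
      rw [this]; simp
    · rcases lt_or_ge R (dist z x) with hd2 | hd2
      · have : g z = 0 := gvec_eq_zero (fderiv_cutoff_outer hr hrR hL hd2)
        rw [this]; simp
      · -- r ≤ d ≤ R : find the shell
        set d := dist z x with hdd
        have hd0 : 0 < d := lt_of_lt_of_le hr hd
        set t : ℝ := R / d with ht
        have ht1 : 1 ≤ t := (le_div_iff₀ hd0).mpr (by linarith)
        have htn : t ≤ 2^n := by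
          rw [ht, div_le_iff₀ hd0]
          calc R = 2^n * r := by rw [hrdef]; field_simp
          _ ≤ 2^n * d := by
              apply mul_le_mul_of_nonneg_left hd (by positivity)
        set k : ℕ := Nat.log 2 ⌊t⌋₊ with hk
        have hfl1 : 1 ≤ ⌊t⌋₊ := Nat.le_floor (by exact_mod_cast ht1)
        have h2k : (2:ℝ)^k ≤ t := by
          calc (2:ℝ)^k ≤ (⌊t⌋₊ : ℝ) := by
                exact_mod_cast Nat.pow_log_le_self 2 (by omega)
          _ ≤ t := Nat.floor_le (by linarith)
        have h2k1 : t ≤ 2^(k+1) := by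
          have h1 : ⌊t⌋₊ < 2^(k+1) := Nat.lt_pow_succ_log_self (by norm_num) _
          have h2 : t < (⌊t⌋₊ : ℝ) + 1 := Nat.lt_floor_add_one t
          have h3 : ((⌊t⌋₊ : ℝ) + 1) ≤ 2^(k+1) := by exact_mod_cast Nat.succ_le_of_lt h1
          linarith
        have hkn : k ≤ n := by
          by_contra hc2
          push_neg at hc2
          have : (2:ℝ)^n < 2^k := by
            apply pow_lt_pow_right₀ (by norm_num) hc2
          linarith
        have hzS : z ∈ S k := by
          constructor
          · rw [div_le_iff₀ (by positivity)]
            have := (div_le_iff₀ hd0).mp h2k1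
            linarith [mul_comm d ((2:ℝ)^(k+1))]
          · rw [le_div_iff₀ (by positivity)]
            have := (le_div_iff₀ hd0).mp h2k
            linarith [mul_comm d ((2:ℝ)^k)]
        have hbound : ENNReal.ofReal (‖g z‖^2) ≤ c k := by
          rw [hc]
          apply ENNReal.ofReal_le_ofReal
          have hs : (0:ℝ) < R/2^(k+2) := by positivity
          have hsd : R/2^(k+2) < d := by
            have : R/2^(k+2) < R/2^(k+1) := by
              apply div_lt_div_of_pos_left hR (by positivity)
              exact pow_lt_pow_right₀ (by norm_num) (by omega)
            exact lt_of_lt_of_le this hzS.1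
          have hfd : ‖fderiv ℝ w z‖ ≤ B / (L * (R/2^(k+2))) :=
            norm_fderiv_cutoff_le hr hL hB hlip hs hsd
          have h1 := gvec_norm_sq_le (x := x) (R := R) (r := r) (L := L) z
          have h2 : ‖fderiv ℝ w z‖^2 ≤ (B / (L * (R/2^(k+2))))^2 := by
            apply sq_le_sq' _ hfd
            linarith [norm_nonneg (fderiv ℝ w z)]
          calc ‖g z‖^2 ≤ 2 * ‖fderiv ℝ w z‖^2 := h1
            _ ≤ 2 * (B / (L * (R/2^(k+2))))^2 := by linarith
        calc ENNReal.ofReal (‖g z‖^2) ≤ c k := hbound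
          _ = (S k).indicator (fun _ => c k) z := by rw [Set.indicator_of_mem hzS]
          _ ≤ ∑ j ∈ Finset.range (n+1), (S j).indicator (fun _ => c j) z := by
              apply Finset.single_le_sum (f := fun j => (S j).indicator (fun _ => c j) z)
                (fun j _ => zero_le) (Finset.mem_range.mpr (by omega))
  -- integral bound
  have hgc : Continuous g := gvec_continuous hr hrR hL hLval
  have hdistm : Measurable fun z : Plane => dist z x :=
    (continuous_id.dist continuous_const).measurable
  have hSmeas : ∀ k, MeasurableSet (S k) := by
    intro k
    have : S k = {z : Plane | R/2^(k+1) ≤ dist z x} ∩ {z : Plane | dist z x ≤ R/2^k} := rfl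
    rw [this]
    exact (measurableSet_le measurable_const hdistm).inter
      (measurableSet_le hdistm measurable_const)
  set E' : ℝ := 128 * B^2 * κ' / L^2 with hE'
  have hE'0 : 0 ≤ E' := by positivity
  have hterm : ∀ k ∈ Finset.range (n+1),
      ∫⁻ z, (S k).indicator (fun _ => c k) z ≤ ENNReal.ofReal E' := by
    intro k _
    rw [lintegral_indicator_const (hSmeas k)]
    have hsub : S k ⊆ Metric.ball x (2*(R/2^k)) := by
      intro z hz
      have h2 : dist z x ≤ R/2^k := hz.2
      have : (0:ℝ) < R/2^k := by positivity
      exact mem_ball.mpr (by linarith)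
    calc c k * volume (S k) ≤ c k * volume (Metric.ball x (2*(R/2^k))) := by
          exact mul_le_mul_right (measure_mono hsub) _
      _ = c k * ((ENNReal.ofReal (2*(R/2^k))) ^ 2 * ENNReal.ofReal κ') := by
          rw [show volume (Metric.ball x (2*(R/2^k))) =
            (ENNReal.ofReal (2*(R/2^k))) ^ 2 * ENNReal.ofReal κ' by
              simpa [hκdef] using EuclideanSpace.volume_ball (Fin 2) x (2*(R/2^k))]
      _ = ENNReal.ofReal (2 * (B/(L * (R/2^(k+2))))^2 * ((2*(R/2^k))^2 * κ')) := by
          rw [hc, ← ENNReal.ofReal_pow (by positivity), ← ENNReal.ofReal_mul (by positivity),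
            ← ENNReal.ofReal_mul (by positivity)]
      _ = ENNReal.ofReal E' := by
          congr 1
          rw [hE']
          field_simp
          ring
  have key : ∫⁻ z in Ω, ENNReal.ofReal (‖g z‖^2) ≤ ENNReal.ofReal ((n+1) * E') := by
    calc ∫⁻ z in Ω, ENNReal.ofReal (‖g z‖^2)
        ≤ ∫⁻ z, ENNReal.ofReal (‖g z‖^2) := setLIntegral_le_lintegral _ _
      _ ≤ ∫⁻ z, ∑ k ∈ Finset.range (n+1), (S k).indicator (fun _ => c k) z :=
          lintegral_mono P
      _ = ∑ k ∈ Finset.range (n+1), ∫⁻ z, (S k).indicator (fun _ => c k) z := by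
          apply lintegral_finset_sum
          exact fun k _ => measurable_const.indicator (hSmeas k)
      _ ≤ ∑ k ∈ Finset.range (n+1), ENNReal.ofReal E' := Finset.sum_le_sum hterm
      _ = (n+1) * ENNReal.ofReal E' := by
          rw [Finset.sum_const, Finset.card_range, nsmul_eq_mul]; push_cast; ring
      _ = ENNReal.ofReal ((n+1) * E') := by
          rw [ENNReal.ofReal_mul (by positivity)]
          congr 1
          rw [ENNReal.ofReal_add (by positivity) (by norm_num), ENNReal.ofReal_natCast,
            ENNReal.ofReal_one]
  have henergy : dirEnergy Ω g = ENNReal.toReal (∫⁻ z in Ω, ENNReal.ofReal (‖g z‖^2)) := by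
    rw [dirEnergy]
    exact integral_eq_lintegral_of_nonneg_ae (Filter.Eventually.of_forall fun z => sq_nonneg _)
      ((hgc.norm.pow 2).aestronglyMeasurable)
  rw [henergy]
  calc ENNReal.toReal (∫⁻ z in Ω, ENNReal.ofReal (‖g z‖^2))
      ≤ ENNReal.toReal (ENNReal.ofReal ((n+1) * E')) :=
        ENNReal.toReal_mono ENNReal.ofReal_ne_top key
    _ = (n+1) * E' := ENNReal.toReal_ofReal (by positivity)
    _ = (n+1) * (128 * B^2 * κ') / L^2 := by rw [hE']; ring
end energy

def LipJoin (U : Set Plane) (p q : Plane) : Prop :=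
  ∃ γ : ℝ → Plane, (∃ K : NNReal, LipschitzWith K γ) ∧ γ 0 = p ∧ γ 1 = q ∧ γ '' Icc 0 1 ⊆ U

lemma lipJoin_refl {U : Set Plane} {p : Plane} (hp : p ∈ U) : LipJoin U p p :=
  ⟨fun _ => p, ⟨0, LipschitzWith.const p⟩, rfl, rfl, by
    intro z hz; obtain ⟨t, _, ht⟩ := hz; rw [← ht]; exact hp⟩

lemma lipJoin_segment {U : Set Plane} {p q : Plane} (hconv : segment ℝ p q ⊆ U) :
    LipJoin U p q := by
  refine ⟨fun t => p + t • (q - p), ⟨‖q - p‖₊, ?_⟩, by simp, by simp, ?_⟩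
  · apply LipschitzWith.of_dist_le_mul
    intro a b
    rw [dist_eq_norm]
    have : p + a • (q - p) - (p + b • (q - p)) = (a - b) • (q - p) := by
      rw [add_sub_add_left_eq_sub, ← sub_smul]
    rw [this, norm_smul, Real.dist_eq]
    simp [coe_nnnorm, Real.norm_eq_abs, mul_comm]
  · rw [← segment_eq_image']
    exact hconv

lemma lipschitzWith_glue {K₁ K₂ : NNReal} {γ₁ γ₂ : ℝ → Plane}
    (h₁ : LipschitzWith K₁ γ₁) (h₂ : LipschitzWith K₂ γ₂) (hm : γ₁ 1 = γ₂ 0) :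
    LipschitzWith (2 * (K₁ ⊔ K₂)) (fun t => if t ≤ 1/2 then γ₁ (2*t) else γ₂ (2*t - 1)) := by
  apply LipschitzWith.of_dist_le_mul
  have hcoe : ((2 * (K₁ ⊔ K₂) : NNReal) : ℝ) = 2 * ((K₁ : ℝ) ⊔ (K₂ : ℝ)) := by
    push_cast; rfl
  have hK₁ : (0:ℝ) ≤ K₁ := K₁.coe_nonneg
  have hK₂ : (0:ℝ) ≤ K₂ := K₂.coe_nonneg
  have hm₁ : (K₁:ℝ) ≤ (K₁:ℝ) ⊔ (K₂:ℝ) := le_sup_left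
  have hm₂ : (K₂:ℝ) ≤ (K₁:ℝ) ⊔ (K₂:ℝ) := le_sup_right
  intro a b
  rw [hcoe]
  rcases le_or_gt a (1/2) with ha | ha <;> rcases le_or_gt b (1/2) with hb | hb
  · simp only [if_pos ha, if_pos hb]
    have k := h₁.dist_le_mul (2*a) (2*b)
    have e1 : dist (2*a) (2*b) = 2 * dist a b := by
      rw [Real.dist_eq, Real.dist_eq, show 2*a - 2*b = 2*(a-b) by ring, abs_mul, abs_two]
    rw [e1] at k
    nlinarith [dist_nonneg (x := a) (y := b)]
  · simp only [if_pos ha, if_neg (not_le.mpr hb)]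
    have k1 := h₁.dist_le_mul (2*a) 1
    have k2 := h₂.dist_le_mul 0 (2*b-1)
    rw [hm] at k1
    have e1 : dist (2*a) (1:ℝ) = 1 - 2*a := by
      rw [Real.dist_eq, abs_of_nonpos (by linarith)]; ring
    have e2 : dist (0:ℝ) (2*b-1) = 2*b - 1 := by
      rw [Real.dist_eq, abs_of_nonpos (by linarith)]; ring
    have e3 : dist a b = b - a := by
      rw [Real.dist_eq, abs_of_nonpos (by linarith)]; ring
    rw [e1] at k1; rw [e2] at k2; rw [e3]
    have tri := dist_triangle (γ₁ (2*a)) (γ₂ 0) (γ₂ (2*b-1))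
    nlinarith
  · simp only [if_neg (not_le.mpr ha), if_pos hb]
    have k1 := h₂.dist_le_mul (2*a-1) 0
    have k2 := h₁.dist_le_mul 1 (2*b)
    rw [hm] at k2
    have e1 : dist (2*a-1) (0:ℝ) = 2*a - 1 := by
      rw [Real.dist_eq, abs_of_nonneg (by linarith)]; ring
    have e2 : dist (1:ℝ) (2*b) = 1 - 2*b := by
      rw [Real.dist_eq, abs_of_nonneg (by linarith)]
    have e3 : dist a b = a - b := by
      rw [Real.dist_eq, abs_of_nonneg (by linarith)]
    rw [e1] at k1; rw [e2] at k2; rw [e3]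
    have tri := dist_triangle (γ₂ (2*a-1)) (γ₂ 0) (γ₁ (2*b))
    rw [dist_comm (γ₂ 0) (γ₁ (2*b))] at tri
    rw [dist_comm (γ₂ 0) (γ₁ (2*b))] at k2
    nlinarith
  · simp only [if_neg (not_le.mpr ha), if_neg (not_le.mpr hb)]
    have k := h₂.dist_le_mul (2*a-1) (2*b-1)
    have e1 : dist (2*a-1) (2*b-1) = 2 * dist a b := by
      rw [Real.dist_eq, Real.dist_eq, show 2*a-1 - (2*b-1) = 2*(a-b) by ring, abs_mul, abs_two]
    rw [e1] at k
    nlinarith [dist_nonneg (x := a) (y := b)]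

lemma lipJoin_trans {U : Set Plane} {p q s : Plane}
    (h1 : LipJoin U p q) (h2 : LipJoin U q s) : LipJoin U p s := by
  obtain ⟨γ₁, ⟨K₁, hK₁⟩, h10, h11, h1im⟩ := h1
  obtain ⟨γ₂, ⟨K₂, hK₂⟩, h20, h21, h2im⟩ := h2
  refine ⟨fun t => if t ≤ 1/2 then γ₁ (2*t) else γ₂ (2*t - 1),
    ⟨2 * (K₁ ⊔ K₂), lipschitzWith_glue hK₁ hK₂ (by rw [h11, h20])⟩, ?_, ?_, ?_⟩
  · simp only [if_pos (by norm_num : (0:ℝ) ≤ 1/2)]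
    simpa using h10
  · simp only [if_neg (by norm_num : ¬ ((1:ℝ) ≤ 1/2))]
    norm_num
    exact h21
  · intro z hz
    obtain ⟨t, ht, hteq⟩ := hz
    by_cases htc : t ≤ 1/2
    · simp only [if_pos htc] at hteq
      exact h1im ⟨2*t, ⟨by linarith [ht.1], by linarith⟩, hteq⟩
    · simp only [if_neg htc] at hteq
      push_neg at htc
      exact h2im ⟨2*t - 1, ⟨by linarith, by linarith [ht.2]⟩, hteq⟩

lemma lipJoin_of_isOpen_isPreconnected {U : Set Plane} (hU : IsOpen U)
    (hc : IsPreconnected U) {p q : Plane} (hp : p ∈ U) (hq : q ∈ U) : LipJoin U p q := by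
  by_contra hcon
  set A : Set Plane := {z | z ∈ U ∧ LipJoin U p z} with hA
  set B : Set Plane := {z | z ∈ U ∧ ¬ LipJoin U p z} with hB
  have hAopen : IsOpen A := by
    rw [isOpen_iff_mem_nhds]
    intro z hz
    obtain ⟨ε, hε, hball⟩ := Metric.isOpen_iff.mp hU z hz.1
    rw [Metric.mem_nhds_iff]
    refine ⟨ε, hε, fun z' hz' => ⟨hball hz', lipJoin_trans hz.2 (lipJoin_segment
      (subset_trans ((convex_ball z ε).segment_subset (mem_ball_self hε) hz') hball))⟩⟩
  have hBopen : IsOpen B := by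
    rw [isOpen_iff_mem_nhds]
    intro z hz
    obtain ⟨ε, hε, hball⟩ := Metric.isOpen_iff.mp hU z hz.1
    rw [Metric.mem_nhds_iff]
    refine ⟨ε, hε, fun z' hz' => ⟨hball hz', fun hjoin => hz.2 (lipJoin_trans hjoin
      (lipJoin_segment (subset_trans ((convex_ball z ε).segment_subset hz' (mem_ball_self hε))
        hball)))⟩⟩
  obtain ⟨z, hzU, hzA, hzB⟩ := hc A B hAopen hBopen
    (fun z hz => by
      by_cases h : LipJoin U p z
      · exact Or.inl ⟨hz, h⟩
      · exact Or.inr ⟨hz, h⟩)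
    ⟨p, hp, hp, lipJoin_refl hp⟩ ⟨q, hq, hq, hcon⟩
  exact hzB.2 hzA.2

lemma lipJoin_rectifiable {U : Set Plane} {p q : Plane} (h : LipJoin U p q) :
    ∃ γ : ℝ → Plane, ContinuousOn γ (Icc 0 1) ∧ γ 0 = p ∧ γ 1 = q ∧ γ '' Icc 0 1 ⊆ U ∧
      eVariationOn γ (Icc 0 1) ≠ ⊤ := by
  obtain ⟨γ, ⟨K, hK⟩, h0, h1, him⟩ := h
  refine ⟨γ, hK.continuous.continuousOn, h0, h1, him, ?_⟩
  have hvar : eVariationOn (γ ∘ id) (Icc 0 1) ≤ K * eVariationOn (id : ℝ → ℝ) (Icc 0 1) :=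
    LipschitzOnWith.comp_eVariationOn_le (hK.lipschitzOnWith (s := univ)) (mapsTo_univ _ _)
  have hid : eVariationOn (id : ℝ → ℝ) (Icc 0 1) ≤ ENNReal.ofReal (1 - 0) := by
    have := MonotoneOn.eVariationOn_le (monotoneOn_id (s := Icc (0:ℝ) 1))
      (left_mem_Icc.mpr zero_le_one) (right_mem_Icc.mpr zero_le_one)
    simpa [inter_self] using this
  have : eVariationOn γ (Icc 0 1) ≤ K * ENNReal.ofReal (1 - 0) := by
    refine le_trans ?_ (mul_le_mul_right hid _)
    simpa [Function.comp_id] using hvar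
  exact ne_top_of_le_ne_top (ENNReal.mul_ne_top ENNReal.coe_ne_top ENNReal.ofReal_ne_top) this

end AuxLemmas


section CapacityLemmas
set_option linter.unusedSectionVars false

lemma dirEnergy_nonneg (Ω : Set Plane) (g : Plane → Plane) : 0 ≤ dirEnergy Ω g :=
  integral_nonneg fun z => sq_nonneg _

lemma capAdm_lowerBound (Ω F₀ F₁ : Set Plane) : ∀ E ∈ capAdm Ω F₀ F₁, 0 ≤ E := by
  rintro E ⟨v, g, _, _, _, _, _, _, hE⟩
  rw [hE]; exact dirEnergy_nonneg Ω g

lemma capBd_empty (Ω : Set Plane) : capBd Ω ∅ = 0 := by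
  have lb : ∀ E ∈ { E : ℝ | ∃ (v : Plane → ℝ) (g : Plane → Plane),
      ContinuousOn v Ω ∧ (∀ x ∈ Ω, 0 ≤ v x) ∧
      IsWeakGradOn Ω v g ∧ MemLp g 2 (volume.restrict Ω) ∧
      (∃ K : Set Plane, IsCompact K ∧ K ⊆ Ω ∧ ∀ x ∈ Ω \ K, v x = 0) ∧
      (∃ U : Set Plane, IsOpen U ∧ (∅ : Set Plane) ⊆ U ∧ ∀ x ∈ U ∩ Ω, 1 ≤ v x) ∧
      E = dirEnergy Ω g }, 0 ≤ E := by
    rintro E ⟨v, g, _, _, _, _, _, _, hE⟩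
    rw [hE]; exact dirEnergy_nonneg Ω g
  have hmem : (0:ℝ) ∈ { E : ℝ | ∃ (v : Plane → ℝ) (g : Plane → Plane),
      ContinuousOn v Ω ∧ (∀ x ∈ Ω, 0 ≤ v x) ∧
      IsWeakGradOn Ω v g ∧ MemLp g 2 (volume.restrict Ω) ∧
      (∃ K : Set Plane, IsCompact K ∧ K ⊆ Ω ∧ ∀ x ∈ Ω \ K, v x = 0) ∧
      (∃ U : Set Plane, IsOpen U ∧ (∅ : Set Plane) ⊆ U ∧ ∀ x ∈ U ∩ Ω, 1 ≤ v x) ∧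
      E = dirEnergy Ω g } := by
    refine ⟨fun _ => 0, fun _ => 0, continuousOn_const, fun _ _ => le_rfl, ?_, MemLp.zero',
      ⟨∅, isCompact_empty, empty_subset _, fun _ _ => rfl⟩,
      ⟨∅, isOpen_empty, Subset.rfl, fun z hz => absurd hz.1 (notMem_empty z)⟩, ?_⟩
    · intro φ _ _ _ i
      have h0 : ((fun _ : Plane => (0 : Plane)) : Plane → Plane) = fun _ => 0 := rfl
      simp [show ∀ z : Plane, ((0 : Plane) i : ℝ) = 0 from fun z => rfl]
    · simp [dirEnergy]
  exact le_antisymm (csInf_le ⟨0, lb⟩ hmem) (le_csInf ⟨0, hmem⟩ lb)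

lemma exists_good_radius (Ω F V : Set Plane) (hFV : IsAdmPair Ω F V) (x : Plane)
    (hxΩ : x ∉ Ω) {δ : ℝ} (hδ : 0 < δ) :
    ∃ r > 0, (Metric.ball x r ∩ V = ∅) ∧
      ∀ A : Set Plane, A ⊆ Metric.ball x r → cap2 Ω F A < δ := by
  obtain ⟨hFc, hFconn, hVc, hFsubV, hclV, -⟩ := hFV
  have hVne : V.Nonempty := hFconn.nonempty.mono hFsubV
  have hxV : x ∉ V := fun hc => hxΩ (hclV (subset_closure hc))
  set R₀ := infDist x V with hR₀def
  have hR₀ : 0 < R₀ := (hVc.isClosed.notMem_iff_infDist_pos hVne).mp hxV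
  set R := R₀ / 2 with hRdef
  have hR : 0 < R := by positivity
  obtain ⟨B, hB, -, hlip⟩ := exists_smoothTransition_bound
  set κ' : ℝ := Real.sqrt Real.pi ^ 2 / Real.Gamma (2/2+1) with hκdef
  have hκ : 0 ≤ κ' := div_nonneg (sq_nonneg _) (Real.Gamma_pos_of_pos (by norm_num)).le
  set D : ℝ := 128 * B^2 * κ' with hDdef
  have hD : 0 ≤ D := by positivity
  have hlog2 : 0 < Real.log 2 := Real.log_pos one_lt_two
  obtain ⟨n₀, hn₀⟩ := exists_nat_gt (2 * D / ((Real.log 2)^2 * δ))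
  set n : ℕ := n₀ + 1 with hndef
  have hn1 : 1 ≤ n := by omega
  have hncast : (1:ℝ) ≤ n := by exact_mod_cast hn1
  have hnbig : 2 * D / ((Real.log 2)^2 * δ) < n := by
    refine lt_of_lt_of_le hn₀ ?_
    rw [hndef]; push_cast; linarith
  have hlt : (n+1) * (128 * B^2 * κ') / (n * Real.log 2)^2 < δ := by
    rw [div_lt_iff₀ (by positivity)]
    have h2D : 2 * D < (n:ℝ) * ((Real.log 2)^2 * δ) :=
      (div_lt_iff₀ (by positivity)).mp hnbig
    rw [← hDdef]
    nlinarith [mul_lt_mul_of_pos_left h2D (show (0:ℝ) < n by linarith), hD, hncast]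
  set r : ℝ := R / 2^n with hrdef
  have h2n : (1:ℝ) < 2^n := by
    have : (2:ℝ)^1 ≤ 2^n := pow_le_pow_right₀ one_le_two hn1
    norm_num at this ⊢; linarith
  have hr : 0 < r := by positivity
  have hrR : r < R := by rw [hrdef]; exact div_lt_self hR h2n
  set L : ℝ := n * Real.log 2 with hLdef
  have hL : 0 < L := by positivity
  have hLval : L = Real.log R - Real.log r := by
    rw [hLdef, hrdef, Real.log_div hR.ne' (by positivity), Real.log_pow, hndef]
    push_cast
    ring
  have hrR₀ : r < R₀ := by rw [hRdef] at hrR; linarith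
  refine ⟨r, hr, ?_, ?_⟩
  · apply eq_empty_iff_forall_notMem.mpr
    rintro z ⟨hzb, hzV⟩
    have h1 : dist x z ≥ R₀ := infDist_le_dist_of_mem hzV
    have h2 : dist z x < r := mem_ball.mp hzb
    rw [dist_comm] at h1
    linarith
  · intro A hA
    refine lt_of_le_of_lt ?_ hlt
    have hFsub : F ⊆ {z : Plane | R < dist z x} := by
      intro f hf
      have h1 : R₀ ≤ dist x f := infDist_le_dist_of_mem (hFsubV hf)
      rw [mem_setOf_eq, dist_comm]
      rw [hRdef]; linarith
    have hmem : dirEnergy Ω (gvec x R r L) ∈ capAdm Ω F A := by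
      refine ⟨cutoff x R r L, gvec x R r L,
        (cutoff_contDiff hr hrR hL hLval).continuous.continuousOn,
        fun z _ => cutoff_nonneg z,
        cutoff_isWeakGradOn hr hrR hL hLval Ω,
        gvec_memℒp hr hrR hL hLval Ω,
        ⟨{z : Plane | R < dist z x},
          isOpen_lt continuous_const (continuous_id.dist continuous_const), hFsub,
          fun z hz => cutoff_zero hr hrR hL (le_of_lt hz.1)⟩,
        ⟨Metric.ball x r, isOpen_ball, hA,
          fun z hz => le_of_eq (cutoff_one hr hL hLval (le_of_lt (mem_ball.mp hz.1))).symm⟩,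
        rfl⟩
    refine le_trans (csInf_le ⟨0, capAdm_lowerBound Ω F A⟩ hmem) ?_
    have := dirEnergy_cutoff_le (x := x) hR hB hlip n hn1 Ω
    rw [← hrdef, ← hLdef] at this
    exact le_trans this (le_of_eq (by rw [hκdef]))

end CapacityLemmas

/-- If `Ω` is locally connected at `x ∈ ∂Ω` and `x ∈ s_h` for some
boundary element `h ∈ H_ρ`, then for every sequence `(x_m)` in `Ω` with
`|x_m − x| → 0` one has `ρ_(F,V)(x_m, h) → 0`. -/
theorem capDist_tendsto_of_tendsto_boundary_point
    (Ω : Set Plane) (hΩ : IsPlaneDomain Ω)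
    (F V : Set Plane) (hFV : IsAdmPair Ω F V)
    (X : Type) [MetricSpace X] (ι : Plane → X) (hX : IsCapCompletion Ω F V X ι)
    (x : Plane) (hx : x ∈ frontier Ω) (hlc : LocallyConnectedAt Ω x)
    (h : X) (hb : h ∉ ι '' Ω) (hxh : x ∈ realization Ω ι h) :
    ∀ xm : ℕ → Plane, (∀ m, xm m ∈ Ω) →
      Tendsto (fun m => dist (xm m) x) atTop (nhds 0) →
      Tendsto (fun m => dist (ι (xm m)) h) atTop (nhds 0) := by
  intro xm hxm htend
  rw [Metric.tendsto_atTop]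
  intro ε hε
  have hε2 : 0 < ε/2 := half_pos hε
  have hxΩ : x ∉ Ω := fun hc => hx.2 (by rwa [hΩ.1.interior_eq])
  obtain ⟨r, hr0, hrV, hcap⟩ := exists_good_radius Ω F V hFV x hxΩ
    (show 0 < (ε/2)^2 by positivity)
  obtain ⟨U, hUopen, hxU, hUball, hUconn⟩ := hlc r hr0
  have hclos : x ∈ closure (Ω ∩ ι ⁻¹' Metric.ball h (ε/2)) := by
    have h' := hxh
    rw [realization] at h'
    exact mem_iInter₂.mp h' (ε/2) (mem_Ioi.mpr hε2)
  obtain ⟨y, hyU, hyΩ, hyball⟩ := mem_closure_iff.mp hclos U hUopen hxU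
  have hxtend : Tendsto xm atTop (nhds x) := tendsto_iff_dist_tendsto_zero.mpr htend
  have hev : ∀ᶠ m in atTop, xm m ∈ U := hxtend.eventually_mem (hUopen.mem_nhds hxU)
  obtain ⟨N, hN⟩ := eventually_atTop.mp hev
  refine ⟨N, fun m hm => ?_⟩
  have hUΩopen : IsOpen (U ∩ Ω) := hUopen.inter hΩ.1
  have hjoin := lipJoin_of_isOpen_isPreconnected hUΩopen hUconn.isPreconnected
    ⟨hN m hm, hxm m⟩ ⟨hyU, hyΩ⟩
  obtain ⟨γ, hγc, hγ0, hγ1, hγim, hγvar⟩ := lipJoin_rectifiable hjoin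
  have himΩ : γ '' Icc 0 1 ⊆ Ω := hγim.trans inter_subset_right
  have himball : γ '' Icc 0 1 ⊆ Metric.ball x r :=
    hγim.trans (inter_subset_left.trans hUball)
  have hIV : γ '' Icc 0 1 ∩ V = ∅ :=
    eq_empty_of_subset_empty (by rw [← hrV]; exact inter_subset_inter_left V himball)
  have hcd : capDist Ω F V (xm m) y ≤ Real.sqrt (cap2 Ω F (γ '' Icc 0 1 \ V)) +
      Real.sqrt (capBd Ω (γ '' Icc 0 1 ∩ V)) := by
    apply csInf_le
    · refine ⟨0, ?_⟩
      rintro d ⟨γ', _, _, hd⟩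
      rw [hd]; positivity
    · exact ⟨γ, ⟨hγc, hγ0, hγ1, himΩ⟩, hγvar, rfl⟩
  have h1 : Real.sqrt (cap2 Ω F (γ '' Icc 0 1 \ V)) < ε/2 := by
    rw [Real.sqrt_lt' hε2]
    exact hcap _ (diff_subset.trans himball)
  have h2 : capBd Ω (γ '' Icc 0 1 ∩ V) = 0 := by rw [hIV]; exact capBd_empty Ω
  have hcd2 : capDist Ω F V (xm m) y < ε/2 := by
    rw [h2, Real.sqrt_zero, add_zero] at hcd
    linarith
  have hdeq : dist (ι (xm m)) (ι y) = capDist Ω F V (xm m) y :=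
    hX.2.2.2 _ (hxm m) _ hyΩ
  have hyh : dist (ι y) h < ε/2 := by simpa [mem_preimage, mem_ball] using hyball
  have hfin : dist (ι (xm m)) h < ε := by
    calc dist (ι (xm m)) h ≤ dist (ι (xm m)) (ι y) + dist (ι y) h := dist_triangle _ _ _
      _ < ε/2 + ε/2 := by rw [hdeq]; exact add_lt_add hcd2 hyh
      _ = ε := by ring
  simpa [Real.dist_eq, abs_of_nonneg dist_nonneg] using hfin
end
end
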